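/- Let (g, ω) be a symplectic Lie algebra with associated left-symmetric product ·. Then · is Novikov (i.e., (x·y)·z = (x·z)·y for all x, y, z) if and only if · is associative. -/

import Mathlib

/-!
Write `P(x, y, z, w) = ω(z, [x·y, w])`, so that `ω((x·y)·z, w) = -P(x, y, z, w)`. Associativity says
`P(x, y, z, w) = ω(z, [y, [w, x]])`, the Novikov identity says that `P` is symmetric in `y, z`.
Expanding `ω(a·b, c·d)` through either factor gives a linear relation between `P(a, b, d, c)` and
`P(c, d, a, b)`. For symmetric `P`, three instances of it and the Jacobi identity force
`P(x, y, z, w) = ω(y, [z, [w, x]])`, which is associativity after swapping `y` and `z`.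
Conversely, for associative products the same relation shows that `[g, g]` is isotropic, and then
the cocycle identity `ω([y, z], u) = ω(y, [z, u]) - ω(z, [y, u])` makes `P` symmetric in `y, z`.
-/

section

variable {R g : Type*} [CommRing R] [LieRing g] [Module R g]

structure IsSymplecticLeftSymmetricProduct (ω : g →ₗ[R] g →ₗ[R] R) (mul : g →ₗ[R] g →ₗ[R] g) :
    Prop where
  skew : ∀ x y, ω x y = -ω y x
  nondeg : ∀ x, (∀ y, ω x y = 0) → x = 0
  cocycle : ∀ x y z, ω ⁅x, y⁆ z + ω ⁅y, z⁆ x + ω ⁅z, x⁆ y = 0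
  omega_mul : ∀ x y z, ω (mul x y) z = -ω y ⁅x, z⁆

namespace IsSymplecticLeftSymmetricProduct

variable {ω : g →ₗ[R] g →ₗ[R] R} {mul : g →ₗ[R] g →ₗ[R] g}
  (h : IsSymplecticLeftSymmetricProduct ω mul)
include h

theorem omega_lie_left (x y z : g) : ω ⁅x, y⁆ z = ω x ⁅y, z⁆ - ω y ⁅x, z⁆ := by
  have hzx : ω ⁅z, x⁆ y = ω y ⁅x, z⁆ := by
    rw [h.skew, ← lie_skew x z, map_neg]
  linear_combination h.cocycle x y z - h.skew ⁅y, z⁆ x - hzx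

theorem omega_mul_right (x y z : g) : ω z (mul x y) = ω y ⁅x, z⁆ := by
  rw [h.skew, h.omega_mul, neg_neg]

theorem eq_iff_forall_omega {u v : g} : u = v ↔ ∀ w, ω u w = ω v w := by
  refine ⟨by rintro rfl w; rfl, fun huv => sub_eq_zero.1 (h.nondeg _ fun w => ?_)⟩
  rw [map_sub, LinearMap.sub_apply, huv, sub_self]

theorem mul_sub_mul_swap (x y : g) : mul x y - mul y x = ⁅x, y⁆ :=
  h.eq_iff_forall_omega.2 fun z => by
    rw [map_sub, LinearMap.sub_apply, h.omega_mul, h.omega_mul, h.omega_lie_left]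
    ring

/-- Both sides come from expanding `ω(a·b, c·d)`, through `a·b` and through `c·d` respectively. -/
theorem omega_lie_mul_add (a b c d : g) :
    ω d ⁅mul a b, c⁆ + ω a ⁅mul c d, b⁆ = -ω d ⁅c, ⁅a, b⁆⁆ := by
  have hfirst : ω (mul a b) (mul c d) = ω d ⁅c, ⁅a, b⁆⁆ + ω a ⁅mul c d, b⁆ := by
    rw [h.omega_mul, ← h.mul_sub_mul_swap, map_sub, h.omega_mul_right, h.omega_mul_right,
      h.omega_mul]
    ring
  have hsecond : ω (mul a b) (mul c d) = -ω d ⁅mul a b, c⁆ := by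
    rw [h.omega_mul_right, ← lie_skew, map_neg]
  linear_combination hsecond - hfirst

theorem mul_assoc_iff (x y z : g) :
    mul (mul x y) z = mul x (mul y z) ↔ ∀ w, ω z ⁅mul x y, w⁆ = ω z ⁅y, ⁅w, x⁆⁆ := by
  rw [h.eq_iff_forall_omega]
  refine forall_congr' fun w => ?_
  rw [h.omega_mul, h.omega_mul, h.omega_mul, ← lie_skew w x, lie_neg, map_neg, neg_neg,
    neg_eq_iff_eq_neg]

theorem mul_right_comm_iff (x y z : g) :
    mul (mul x y) z = mul (mul x z) y ↔ ∀ w, ω z ⁅mul x y, w⁆ = ω y ⁅mul x z, w⁆ := by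
  rw [h.eq_iff_forall_omega]
  refine forall_congr' fun w => ?_
  rw [h.omega_mul, h.omega_mul, neg_inj]

theorem omega_lie_lie_eq_zero_of_assoc
    (hassoc : ∀ x y z w, ω z ⁅mul x y, w⁆ = ω z ⁅y, ⁅w, x⁆⁆) (a b c d : g) :
    ω ⁅a, d⁆ ⁅b, c⁆ = 0 := by
  have hjacobi : ω d ⁅a, ⁅b, c⁆⁆ + ω d ⁅b, ⁅c, a⁆⁆ + ω d ⁅c, ⁅a, b⁆⁆ = 0 := by
    rw [← map_add, ← map_add, lie_jacobi, map_zero]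
  linear_combination h.omega_lie_left a d ⁅b, c⁆ + h.omega_lie_mul_add a b c d
    - hassoc a b d c - hassoc c d a b - hjacobi

theorem omega_lie_mul_of_novikov [IsAddTorsionFree R]
    (hnovikov : ∀ x y z w, ω z ⁅mul x y, w⁆ = ω y ⁅mul x z, w⁆) (x y z w : g) :
    ω z ⁅mul x y, w⁆ = ω y ⁅z, ⁅w, x⁆⁆ := by
  have hjacobi : ω y ⁅x, ⁅z, w⁆⁆ + ω y ⁅z, ⁅w, x⁆⁆ + ω y ⁅w, ⁅x, z⁆⁆ = 0 := by
    rw [← map_add, ← map_add, lie_jacobi, map_zero]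
  -- three instances of `omega_lie_mul_add` give the pairwise sums of three values of `P`
  have htwice : 2 • ω z ⁅mul x y, w⁆ = 2 • ω y ⁅z, ⁅w, x⁆⁆ := by
    rw [two_nsmul, two_nsmul]
    linear_combination h.omega_lie_mul_add z w x y - h.omega_lie_mul_add w x z y
      + h.omega_lie_mul_add x z w y - hnovikov z w y x + hnovikov w x y z - hnovikov x z y w
      - hjacobi
  exact IsAddTorsionFree.nsmul_right_injective two_ne_zero htwice

end IsSymplecticLeftSymmetricProduct

end

theorem snla_stmt_3 (g : Type*) [LieRing g] [LieAlgebra ℝ g]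
    (ω : g →ₗ[ℝ] g →ₗ[ℝ] ℝ)
    (hskew : ∀ x y : g, ω x y = - ω y x)
    (hnondeg : ∀ x : g, (∀ y : g, ω x y = 0) → x = 0)
    (hcocycle : ∀ x y z : g, ω ⁅x, y⁆ z + ω ⁅y, z⁆ x + ω ⁅z, x⁆ y = 0)
    (mul : g →ₗ[ℝ] g →ₗ[ℝ] g)
    (hdef : ∀ x y z : g, ω (mul x y) z = - ω y ⁅x, z⁆) :
    (∀ x y z : g, mul (mul x y) z = mul (mul x z) y) ↔
      (∀ x y z : g, mul (mul x y) z = mul x (mul y z)) := by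
  have h : IsSymplecticLeftSymmetricProduct ω mul := ⟨hskew, hnondeg, hcocycle, hdef⟩
  simp only [h.mul_right_comm_iff, h.mul_assoc_iff]
  constructor
  · intro hnovikov x y z w
    exact (hnovikov x y z w).trans (h.omega_lie_mul_of_novikov hnovikov x z y w)
  · intro hassoc x y z w
    rw [hassoc, hassoc]
    linear_combination h.omega_lie_left y z ⁅w, x⁆ - h.omega_lie_lie_eq_zero_of_assoc hassoc y w x z
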